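/- Let x ∉ D ∪ D̃ and suppose x lies in the open interval (a_n, b_n) which is a connected component of [0,1] \ D_n. Then (f_r(b_n) - f_r(x))/(b_n - x) ≤ Σ_{k=1}^n g'_k(x) ≤ (f_r(a_n) - f_r(x))/(a_n - x). -/

import Mathlib

/-!
For `k ≤ n` the point `p` of `D_k` nearest to `x` lies outside `(a, b)`, so on `[a, b]` each
`g_k` lies below its tangent line at `x`. Summing over `k ≤ n`, and using that `f_r = ∑ g_k` on
`[0, 1]`, that `g_k ≥ 0`, and that `g_k` vanishes on `D_n` for `k ≥ n`, gives
`f_r y - f_r x ≤ (∑_{k ≤ n} g_k'(x)) (y - x)` for `y = a, b`.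
-/

open Set Filter MeasureTheory Metric Topology

/-- Distance from `x` to the nearest integer. -/
noncomputable def phiTW (x : ℝ) : ℝ := Metric.infDist x (Set.range (Int.cast : ℤ → ℝ))

/-- The Takagi–Van der Waerden function `f_r`. -/
noncomputable def fTW (r : ℕ) (x : ℝ) : ℝ :=
  ∑' n : ℕ, (1 / (r : ℝ) ^ n) * phiTW ((r : ℝ) ^ n * x)

/-- `D_n = { k / r^(n-1) : k ∈ ℤ } ∩ [0,1]` (intended for `n ≥ 1`). -/
def DTW (r n : ℕ) : Set ℝ :=
  {y : ℝ | ∃ k : ℤ, y = (k : ℝ) / (r : ℝ) ^ (n - 1)} ∩ Set.Icc 0 1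

/-- `g_n(x) = dist(x, D_n)`. -/
noncomputable def gTW (r n : ℕ) (x : ℝ) : ℝ := Metric.infDist x (DTW r n)

/-- `D̃_n`: midpoints of consecutive points of `D_n`. -/
def DtTW (r n : ℕ) : Set ℝ :=
  {y : ℝ | ∃ k : ℤ, y = (2 * (k : ℝ) + 1) / (2 * (r : ℝ) ^ (n - 1))} ∩ Set.Icc 0 1

/-- `D = ⋃_{n ≥ 1} D_n`. -/
def DTWall (r : ℕ) : Set ℝ := ⋃ n ≥ 1, DTW r n

/-- `D̃ = ⋃_{n ≥ 1} D̃_n`. -/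
def DtTWall (r : ℕ) : Set ℝ := ⋃ n ≥ 1, DtTW r n

theorem HasDerivAt.eq_of_eventually_le_of_eq {f g : ℝ → ℝ} {f' g' x : ℝ}
    (hf : HasDerivAt f f' x) (hg : HasDerivAt g g' x) (hle : ∀ᶠ z in 𝓝 x, f z ≤ g z)
    (heq : f x = g x) : f' = g' := by
  have hmin : IsLocalMin (fun z => g z - f z) x :=
    hle.mono fun z hz => by simp only [heq, sub_self, sub_nonneg]; exact hz
  linarith [hmin.hasDerivAt_eq_zero (hg.sub hf)]

/-- Since `infDist · S ≤ |· - p|` with equality at `x`, the derivative `s` is the slope `±1` of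
`|· - p|` at `x`, and this majorant is affine on the side of `p` containing `[a, b]`. -/
theorem infDist_sub_le_mul_of_hasDerivAt {S : Set ℝ} {a b p x y s : ℝ} (hp : p ∈ S)
    (hpx : infDist x S = |x - p|) (hpab : p ∉ Ioo a b) (hx : x ∈ Ioo a b) (hy : y ∈ Icc a b)
    (hs : HasDerivAt (infDist · S) s x) :
    infDist y S - infDist x S ≤ s * (y - x) := by
  have hle (z : ℝ) : infDist z S ≤ |z - p| := by
    simpa only [Real.dist_eq] using infDist_le_dist_of_mem hp
  rcases le_or_gt p a with hpa | hbp
  · have hpx' : p < x := hpa.trans_lt hx.1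
    have hs1 : s = 1 := by
      refine hs.eq_of_eventually_le_of_eq ((hasDerivAt_id x).sub_const p) ?_ ?_
      · filter_upwards [Ioi_mem_nhds hpx'] with z hz
        exact (hle z).trans_eq (abs_of_pos (sub_pos.2 hz))
      · rw [hpx, abs_of_pos (sub_pos.2 hpx'), id]
    have hley := hle y
    rw [abs_of_nonneg (by linarith [hy.1])] at hley
    rw [hs1, hpx, abs_of_pos (sub_pos.2 hpx')]
    linarith
  · have hbp : b ≤ p := by
      by_contra! h
      exact hpab ⟨hbp, h⟩
    have hxp : x < p := hx.2.trans_le hbp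
    have hs1 : s = -1 := by
      refine hs.eq_of_eventually_le_of_eq ((hasDerivAt_id x).const_sub p) ?_ ?_
      · filter_upwards [Iio_mem_nhds hxp] with z hz
        exact (hle z).trans_eq (abs_of_neg (sub_neg.2 hz) |>.trans (neg_sub _ _))
      · rw [hpx, abs_of_neg (sub_neg.2 hxp), neg_sub, id]
    have hley := hle y
    rw [abs_of_nonpos (by linarith [hy.2])] at hley
    rw [hs1, hpx, abs_of_neg (sub_neg.2 hxp)]
    linarith

theorem phiTW_eq_abs_sub_round (t : ℝ) : phiTW t = |t - round t| := by
  apply le_antisymm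
  · exact (infDist_le_dist_of_mem (mem_range_self (round t))).trans_eq (Real.dist_eq _ _)
  · refine (le_infDist ⟨_, mem_range_self (round t)⟩).2 ?_
    rintro _ ⟨j, rfl⟩
    rw [Real.dist_eq]
    exact round_le t j

theorem summable_phiTW {r : ℕ} (hr : 1 < r) (y : ℝ) :
    Summable fun k : ℕ => 1 / (r : ℝ) ^ k * phiTW ((r : ℝ) ^ k * y) := by
  have hr' : (1 : ℝ) < r := by exact_mod_cast hr
  refine ((summable_geometric_of_lt_one (by positivity) ((div_lt_one (by positivity)).2 hr')
    ).mul_left (1 / 2)).of_nonneg_of_le (fun k => ?_) (fun k => ?_)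
  · exact mul_nonneg (by positivity) infDist_nonneg
  · rw [one_div_pow, mul_comm (1 / 2 : ℝ)]
    gcongr
    rw [phiTW_eq_abs_sub_round]
    exact abs_sub_round _

theorem round_div_mem_DTW {r : ℕ} (hr : 0 < r) (k : ℕ) {y : ℝ} (hy : y ∈ Icc (0 : ℝ) 1) :
    (round (y * (r : ℝ) ^ k) : ℝ) / (r : ℝ) ^ k ∈ DTW r (k + 1) := by
  have hN : (0 : ℝ) < (r : ℝ) ^ k := by positivity
  have hyN : y * (r : ℝ) ^ k ≤ (r : ℝ) ^ k := mul_le_of_le_one_left hN.le hy.2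
  refine ⟨⟨_, by rw [Nat.add_sub_cancel]⟩, div_nonneg ?_ hN.le, (div_le_one hN).2 ?_⟩
  · have : 0 ≤ round (y * (r : ℝ) ^ k) := by
      rw [round_eq]
      exact Int.floor_nonneg.2 (by linarith [mul_nonneg hy.1 hN.le])
    exact_mod_cast this
  · have : round (y * (r : ℝ) ^ k) ≤ round ((r ^ k : ℕ) : ℝ) := by
      rw [round_eq, round_eq]
      exact Int.floor_le_floor (by push_cast; linarith)
    rw [round_natCast] at this
    exact_mod_cast this

theorem abs_sub_div_eq_abs_mul_sub_div {N : ℝ} (hN : 0 < N) (y z : ℝ) :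
    |y - z / N| = |y * N - z| / N := by
  rw [← abs_of_pos hN, ← abs_div, abs_of_pos hN, sub_div, mul_div_cancel_right₀ _ hN.ne']

theorem gTW_succ_eq_abs_sub_round_div {r : ℕ} (hr : 0 < r) (k : ℕ) {y : ℝ}
    (hy : y ∈ Icc (0 : ℝ) 1) :
    gTW r (k + 1) y = |y - (round (y * (r : ℝ) ^ k) : ℝ) / (r : ℝ) ^ k| := by
  have hN : (0 : ℝ) < (r : ℝ) ^ k := by positivity
  apply le_antisymm
  · exact (infDist_le_dist_of_mem (round_div_mem_DTW hr k hy)).trans_eq (Real.dist_eq _ _)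
  · refine (le_infDist ⟨_, round_div_mem_DTW hr k hy⟩).2 ?_
    rintro _ ⟨⟨j, rfl⟩, -⟩
    rw [Real.dist_eq, Nat.add_sub_cancel, abs_sub_div_eq_abs_mul_sub_div hN,
      abs_sub_div_eq_abs_mul_sub_div hN]
    exact div_le_div_of_nonneg_right (round_le _ j) hN.le

theorem exists_mem_DTW_gTW_eq {r : ℕ} (hr : 0 < r) (k : ℕ) {y : ℝ}
    (hy : y ∈ Icc (0 : ℝ) 1) :
    ∃ p ∈ DTW r (k + 1), gTW r (k + 1) y = |y - p| :=
  ⟨_, round_div_mem_DTW hr k hy, gTW_succ_eq_abs_sub_round_div hr k hy⟩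

theorem gTW_succ_eq_phiTW {r : ℕ} (hr : 0 < r) (k : ℕ) {y : ℝ} (hy : y ∈ Icc (0 : ℝ) 1) :
    gTW r (k + 1) y = 1 / (r : ℝ) ^ k * phiTW ((r : ℝ) ^ k * y) := by
  have hN : (0 : ℝ) < (r : ℝ) ^ k := by positivity
  rw [gTW_succ_eq_abs_sub_round_div hr k hy, abs_sub_div_eq_abs_mul_sub_div hN,
    phiTW_eq_abs_sub_round, mul_comm _ y, one_div_mul_eq_div]

theorem fTW_eq_tsum_gTW {r : ℕ} (hr : 0 < r) {y : ℝ} (hy : y ∈ Icc (0 : ℝ) 1) :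
    fTW r y = ∑' k : ℕ, gTW r (k + 1) y :=
  tsum_congr fun k => (gTW_succ_eq_phiTW hr k hy).symm

theorem DTW_mono {r : ℕ} (hr : 0 < r) {m n : ℕ} (h : m ≤ n) : DTW r m ⊆ DTW r n := by
  rintro _ ⟨⟨j, rfl⟩, hz⟩
  refine ⟨⟨j * r ^ (n - 1 - (m - 1)), ?_⟩, hz⟩
  have hpow : (r : ℝ) ^ (n - 1) = (r : ℝ) ^ (m - 1) * (r : ℝ) ^ (n - 1 - (m - 1)) := by
    rw [← pow_add, Nat.add_sub_cancel' (Nat.sub_le_sub_right h 1)]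
  rw [hpow]
  push_cast
  rw [mul_div_mul_right _ _ (by positivity)]

theorem sum_Icc_one_eq_sum_range (f : ℕ → ℝ) (n : ℕ) :
    ∑ k ∈ Finset.Icc 1 n, f k = ∑ k ∈ Finset.range n, f (k + 1) := by
  rw [Finset.range_eq_Ico, Finset.sum_Ico_add']
  rfl

theorem fTW_eq_sum_gTW_of_mem_DTW {r n : ℕ} (hr : 0 < r) {y : ℝ} (hy : y ∈ DTW r n) :
    fTW r y = ∑ k ∈ Finset.Icc 1 n, gTW r k y := by
  rw [fTW_eq_tsum_gTW hr hy.2, sum_Icc_one_eq_sum_range]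
  refine tsum_eq_sum fun k hk => infDist_zero_of_mem (DTW_mono hr ?_ hy)
  have := Finset.mem_range.not.1 hk
  omega

theorem sum_gTW_le_fTW {r : ℕ} (hr : 1 < r) (n : ℕ) {y : ℝ} (hy : y ∈ Icc (0 : ℝ) 1) :
    ∑ k ∈ Finset.Icc 1 n, gTW r k y ≤ fTW r y := by
  have hr0 : 0 < r := by omega
  rw [fTW_eq_tsum_gTW hr0 hy, sum_Icc_one_eq_sum_range]
  refine Summable.sum_le_tsum _ (fun k _ => infDist_nonneg) ?_
  exact (summable_phiTW hr y).congr fun k => (gTW_succ_eq_phiTW hr0 k hy).symm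

theorem gTW_sub_le_mul {r n k : ℕ} (hr : 0 < r) (hk : 1 ≤ k) (hkn : k ≤ n) {a b x y s : ℝ}
    (hcomp : Ioo a b ∩ DTW r n = ∅) (hx : x ∈ Ioo a b) (hx01 : x ∈ Icc (0 : ℝ) 1)
    (hy : y ∈ Icc a b) (hs : HasDerivAt (gTW r k) s x) :
    gTW r k y - gTW r k x ≤ s * (y - x) := by
  obtain ⟨j, rfl⟩ := Nat.exists_eq_add_of_le' hk
  obtain ⟨p, hp, hpx⟩ := exists_mem_DTW_gTW_eq hr j hx01
  have hpab : p ∉ Ioo a b := fun h =>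
    eq_empty_iff_forall_notMem.1 hcomp p ⟨h, DTW_mono hr hkn hp⟩
  exact infDist_sub_le_mul_of_hasDerivAt hp hpx hpab hx hy hs

theorem fTW_sub_le_sum_mul {r n : ℕ} (hr : 1 < r) {a b x y : ℝ}
    (hcomp : Ioo a b ∩ DTW r n = ∅) (hx : x ∈ Ioo a b) (hx01 : x ∈ Icc (0 : ℝ) 1)
    (hy : y ∈ Icc a b) (hyD : y ∈ DTW r n)
    {s : ℕ → ℝ} (hs : ∀ k, 1 ≤ k → HasDerivAt (gTW r k) (s k) x) :
    fTW r y - fTW r x ≤ (∑ k ∈ Finset.Icc 1 n, s k) * (y - x) := by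
  have hr0 : 0 < r := by omega
  calc fTW r y - fTW r x
        ≤ ∑ k ∈ Finset.Icc 1 n, gTW r k y - ∑ k ∈ Finset.Icc 1 n, gTW r k x := by
        rw [fTW_eq_sum_gTW_of_mem_DTW hr0 hyD]
        linarith [sum_gTW_le_fTW hr n hx01]
    _ = ∑ k ∈ Finset.Icc 1 n, (gTW r k y - gTW r k x) := (Finset.sum_sub_distrib _ _).symm
    _ ≤ ∑ k ∈ Finset.Icc 1 n, s k * (y - x) := Finset.sum_le_sum fun k hk =>
        have hk := Finset.mem_Icc.1 hk
        gTW_sub_le_mul hr0 hk.1 hk.2 hcomp hx hx01 hy (hs k hk.1)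
    _ = (∑ k ∈ Finset.Icc 1 n, s k) * (y - x) := (Finset.sum_mul _ _ _).symm

theorem stmt10_general (r : ℕ) (hr : 2 ≤ r) (n : ℕ) (a b x : ℝ)
    (ha : a ∈ DTW r n) (hb : b ∈ DTW r n) (hax : a < x) (hxb : x < b)
    (hcomp : Set.Ioo a b ∩ DTW r n = ∅)
    (s : ℕ → ℝ) (hs : ∀ k, 1 ≤ k → HasDerivAt (gTW r k) (s k) x) :
    (fTW r b - fTW r x) / (b - x) ≤ ∑ k ∈ Finset.Icc 1 n, s k ∧
    ∑ k ∈ Finset.Icc 1 n, s k ≤ (fTW r a - fTW r x) / (a - x) := by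
  have hx01 : x ∈ Icc (0 : ℝ) 1 := ⟨ha.2.1.trans hax.le, hxb.le.trans hb.2.2⟩
  constructor
  · rw [div_le_iff₀ (sub_pos.2 hxb)]
    exact fTW_sub_le_sum_mul hr hcomp ⟨hax, hxb⟩ hx01 ⟨(hax.trans hxb).le, le_rfl⟩ hb hs
  · rw [le_div_iff_of_neg (sub_neg.2 hax)]
    exact fTW_sub_le_sum_mul hr hcomp ⟨hax, hxb⟩ hx01 ⟨le_rfl, (hax.trans hxb).le⟩ ha hs

theorem stmt10 (r : ℕ) (hr : 2 ≤ r) (n : ℕ) (hn : 1 ≤ n) (a b x : ℝ)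
    (ha : a ∈ DTW r n) (hb : b ∈ DTW r n) (hax : a < x) (hxb : x < b)
    (hcomp : Set.Ioo a b ∩ DTW r n = ∅)
    (hxD : x ∉ DTWall r ∪ DtTWall r)
    (s : ℕ → ℝ) (hs : ∀ k, 1 ≤ k → HasDerivAt (gTW r k) (s k) x) :
    (fTW r b - fTW r x) / (b - x) ≤ ∑ k ∈ Finset.Icc 1 n, s k ∧
    ∑ k ∈ Finset.Icc 1 n, s k ≤ (fTW r a - fTW r x) / (a - x) :=
  stmt10_general r hr n a b x ha hb hax hxb hcomp s hs
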